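/- arXiv:0908.3961 — 6 statements merged into one kernel-verified Lean document; each statement's English description precedes it below -/
import Mathlib

section
/- For every fixed real θ > 0, the limit as α → 1 from below of (1-α)^θ · exp(θ/(1-α) - (θ/(1-α))^α) equals θ^θ. (This identifies the θ-th moment of exp(Y_1), where Y_1 is the distributional limit of Y_α, as θ^θ.) -/
/-!
Substitute `t = θ / (1 - α) → ∞`, so that `α = 1 - θ / t` and the expression becomes
`θ^θ · exp(t - t^(1 - θ/t) - θ log t)`. With `s = θ log t / t → 0` one has
`t^(1 - θ/t) = t e^{-s}` and `θ log t = t s`, so the exponent is `-t (e^{-s} - 1 + s)`,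
which is `O(t s²) = O(θ² (log t)² / t) → 0`.
-/

open Filter Real Topology

lemma tendsto_div_one_sub_nhdsLT_one {θ : ℝ} (hθ : 0 < θ) :
    Tendsto (fun α : ℝ => θ / (1 - α)) (𝓝[<] 1) atTop := by
  have h : Tendsto (fun α : ℝ => 1 - α) (𝓝[<] 1) (𝓝[>] 0) := by
    refine tendsto_nhdsWithin_iff.2 ⟨?_, ?_⟩
    · exact tendsto_nhdsWithin_of_tendsto_nhds
        ((continuous_const.sub continuous_id).tendsto' 1 0 (sub_self 1))
    · filter_upwards [self_mem_nhdsWithin] with α (hα : α < 1)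
      exact sub_pos.2 hα
  simpa only [div_eq_mul_inv, Function.comp_def] using
    (tendsto_inv_nhdsGT_zero.const_mul_atTop hθ).comp h

lemma sub_rpow_one_sub_div_sub_mul_log_eq (θ : ℝ) {t : ℝ} (ht : 0 < t) :
    t - t ^ (1 - θ / t) - θ * log t
      = -(t * (exp (-(θ * log t / t)) - 1 - -(θ * log t / t))) := by
  rw [rpow_def_of_pos ht, show log t * (1 - θ / t) = log t + -(θ * log t / t) by ring,
    exp_add, exp_log ht]
  field_simp
  ring

lemma tendsto_sub_rpow_one_sub_div_sub_mul_log_atTop (θ : ℝ) :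
    Tendsto (fun t : ℝ => t - t ^ (1 - θ / t) - θ * log t) atTop (𝓝 0) := by
  have hs : Tendsto (fun t : ℝ => θ * log t / t) atTop (𝓝 0) := by
    simpa [mul_div_assoc] using
      (tendsto_pow_log_div_mul_add_atTop 1 0 1 one_ne_zero).const_mul θ
  have hbound : Tendsto (fun t : ℝ => θ ^ 2 * (log t ^ 2 / t)) atTop (𝓝 0) := by
    simpa using (tendsto_pow_log_div_mul_add_atTop 1 0 2 one_ne_zero).const_mul (θ ^ 2)
  refine squeeze_zero_norm' ?_ hbound
  filter_upwards [eventually_gt_atTop 0, hs.eventually (eventually_abs_sub_lt 0 one_pos)]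
    with t ht hst
  rw [sub_zero] at hst
  rw [sub_rpow_one_sub_div_sub_mul_log_eq θ ht, norm_neg, norm_mul, norm_of_nonneg ht.le,
    norm_eq_abs]
  calc t * |exp (-(θ * log t / t)) - 1 - -(θ * log t / t)|
      ≤ t * (-(θ * log t / t)) ^ 2 :=
        mul_le_mul_of_nonneg_left
          (abs_exp_sub_one_sub_id_le (by rw [abs_neg]; exact hst.le)) ht.le
    _ = θ ^ 2 * (log t ^ 2 / t) := by field_simp

lemma tendsto_div_rpow_mul_exp_sub_rpow_atTop {θ : ℝ} (hθ : 0 ≤ θ) :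
    Tendsto (fun t : ℝ => (θ / t) ^ θ * exp (t - t ^ (1 - θ / t))) atTop (𝓝 (θ ^ θ)) := by
  have h := ((continuous_exp.tendsto 0).comp
    (tendsto_sub_rpow_one_sub_div_sub_mul_log_atTop θ)).const_mul (θ ^ θ)
  rw [exp_zero, mul_one] at h
  refine h.congr' ?_
  filter_upwards [eventually_gt_atTop 0] with t ht
  rw [Function.comp_apply, div_rpow hθ ht.le, rpow_def_of_pos ht θ, exp_sub, mul_comm (log t)]
  ring

/-- For every fixed real `θ > 0`, the limit as `α → 1⁻` of
`(1-α)^θ exp(θ/(1-α) - (θ/(1-α))^α)` equals `θ^θ`: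
the `θ`-th moment of `exp(Y₁)` is `θ^θ`. -/
theorem moment_limit (θ : ℝ) (hθ : 0 < θ) :
    Tendsto (fun α : ℝ =>
        (1 - α) ^ θ * Real.exp (θ / (1 - α) - (θ / (1 - α)) ^ α))
      (nhdsWithin 1 (Set.Iio 1)) (nhds (θ ^ θ)) := by
  refine ((tendsto_div_rpow_mul_exp_sub_rpow_atTop hθ.le).comp
    (tendsto_div_one_sub_nhdsLT_one hθ)).congr fun α => ?_
  have h : θ / (θ / (1 - α)) = 1 - α := div_div_cancel₀ hθ.ne'
  simp only [Function.comp_apply, h, sub_sub_cancel]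
end

section
/- For every fixed real θ ≠ 0, the limit as α → 1 from below of exp(iθ·[1/(1-α) + log(1-α)] - (iθ/(1-α))^α) equals exp(-π|θ|/2 + iθ log|θ|), where the complex power (iθ/(1-α))^α is taken with the principal branch. -/
/-!
Put `ε = 1 - α` and `z = iθ / ε`. Then `z ^ (1 - ε) = z · exp w` with `w = -ε log z`, and
`log z = log (iθ) - log ε`. Expanding `exp w = 1 + w + (exp w - 1 - w)`, the divergent terms
`iθ / ε` and `iθ log ε` cancel, leaving `iθ log (iθ) = -π|θ|/2 + iθ log|θ|` plus the remainder
`z (exp w - 1 - w) = O(|θ| ε log² ε)`, which tends to `0`.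
-/

open Filter Real Topology

theorem Real.tendsto_mul_log_sq_nhdsGT_zero :
    Tendsto (fun x => x * Real.log x ^ 2) (𝓝[>] 0) (𝓝 0) := by
  refine (isLittleO_abs_log_rpow_rpow_nhdsGT_zero 2 (neg_lt_zero.2 one_pos)).tendsto_div_nhds_zero
    |>.congr' ?_
  filter_upwards [self_mem_nhdsWithin] with x (hx : 0 < x)
  rw [Real.rpow_two, sq_abs, Real.rpow_neg_one, div_inv_eq_mul, mul_comm]

theorem Real.tendsto_mul_log_nhdsGT_zero :
    Tendsto (fun x => x * Real.log x) (𝓝[>] 0) (𝓝 0) :=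
  (tendsto_log_mul_rpow_nhdsGT_zero one_pos).congr fun x => by rw [Real.rpow_one, mul_comm]

theorem Real.tendsto_const_sub_nhdsLT (a : ℝ) : Tendsto (a - ·) (𝓝[<] a) (𝓝[>] 0) :=
  tendsto_nhdsWithin_iff.2
    ⟨((continuous_const.sub continuous_id).tendsto' a 0 (sub_self a)).mono_left nhdsWithin_le_nhds,
      eventually_mem_nhdsWithin.mono fun _ hx => Set.mem_Ioi.2 (sub_pos.2 hx)⟩

namespace Complex

theorem tendsto_mul_exp_sub_one_sub_self {ι : Type*} {l : Filter ι} {c w : ι → ℂ}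
    (hw : Tendsto w l (𝓝 0)) (hcw : Tendsto (fun i => c i * w i ^ 2) l (𝓝 0)) :
    Tendsto (fun i => c i * (exp (w i) - 1 - w i)) l (𝓝 0) := by
  have hsmall : ∀ᶠ i in l, ‖w i‖ ≤ 1 :=
    (tendsto_zero_iff_norm_tendsto_zero.1 hw).eventually (ge_mem_nhds one_pos)
  refine squeeze_zero_norm' ?_ (tendsto_zero_iff_norm_tendsto_zero.1 hcw)
  filter_upwards [hsmall] with i hi
  rw [norm_mul, norm_mul, norm_pow]
  exact mul_le_mul_of_nonneg_left (norm_exp_sub_one_sub_id_le hi) (norm_nonneg _)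

theorem tendsto_ofReal_mul_sub_log_nhdsGT_zero (a : ℂ) :
    Tendsto (fun ε : ℝ => (ε : ℂ) * (a - Real.log ε)) (𝓝[>] 0) (𝓝 0) := by
  have h := ((tendsto_nhdsWithin_of_tendsto_nhds tendsto_id).ofReal.mul_const a).sub
    Real.tendsto_mul_log_nhdsGT_zero.ofReal
  rw [ofReal_zero, zero_mul, sub_zero] at h
  exact h.congr fun ε => by push_cast [id]; ring

theorem tendsto_ofReal_mul_sub_log_sq_nhdsGT_zero (a : ℂ) :
    Tendsto (fun ε : ℝ => (ε : ℂ) * (a - Real.log ε) ^ 2) (𝓝[>] 0) (𝓝 0) := by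
  have h := (((tendsto_nhdsWithin_of_tendsto_nhds tendsto_id).ofReal.mul_const (a ^ 2)).sub
    (Real.tendsto_mul_log_nhdsGT_zero.ofReal.const_mul (2 * a))).add
    Real.tendsto_mul_log_sq_nhdsGT_zero.ofReal
  rw [ofReal_zero, zero_mul, mul_zero, sub_zero, zero_add] at h
  exact h.congr fun ε => by push_cast [id]; ring

theorem log_div_ofReal {c : ℂ} (hc : c ≠ 0) {ε : ℝ} (hε : 0 < ε) :
    log (c / ε) = log c - Real.log ε := by
  rw [div_eq_mul_inv, ← ofReal_inv, log_mul_ofReal _ (inv_pos.2 hε) _ hc, Real.log_inv,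
    ofReal_neg, neg_add_eq_sub]

theorem mul_add_log_sub_div_cpow_one_sub {c : ℂ} (hc : c ≠ 0) {ε : ℝ} (hε : 0 < ε) :
    c * ((1 / ε + Real.log ε : ℝ) : ℂ) - (c / ε) ^ ((1 - ε : ℝ) : ℂ) =
      c * log c - c / ε * (exp (-(ε * (log c - Real.log ε))) - 1 -
        -(ε * (log c - Real.log ε))) := by
  have hε' : (ε : ℂ) ≠ 0 := ofReal_ne_zero.2 hε.ne'
  have hz : c / ε ≠ 0 := div_ne_zero hc hε'
  have hpow : (c / ε) ^ ((1 - ε : ℝ) : ℂ) = c / ε * exp (-(ε * (log c - Real.log ε))) := by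
    rw [ofReal_sub, ofReal_one, cpow_sub _ _ hz, cpow_one, cpow_def_of_ne_zero hz,
      log_div_ofReal hc hε, exp_neg, div_eq_mul_inv, mul_comm (log c - _)]
  rw [hpow]
  push_cast
  field_simp
  ring

theorem tendsto_mul_add_log_sub_div_cpow_one_sub {c : ℂ} (hc : c ≠ 0) :
    Tendsto (fun ε : ℝ => c * ((1 / ε + Real.log ε : ℝ) : ℂ) - (c / ε) ^ ((1 - ε : ℝ) : ℂ))
      (𝓝[>] 0) (𝓝 (c * log c)) := by
  have hw := (tendsto_ofReal_mul_sub_log_nhdsGT_zero (log c)).neg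
  rw [neg_zero] at hw
  have hcw : Tendsto (fun ε : ℝ => c / ε * (-(ε * (log c - Real.log ε))) ^ 2) (𝓝[>] 0) (𝓝 0) := by
    have h := (tendsto_ofReal_mul_sub_log_sq_nhdsGT_zero (log c)).const_mul c
    rw [mul_zero] at h
    refine h.congr' ?_
    filter_upwards [self_mem_nhdsWithin] with ε (hε : 0 < ε)
    field_simp [ofReal_ne_zero.2 hε.ne']
  have h := (tendsto_const_nhds (x := c * log c)).sub (tendsto_mul_exp_sub_one_sub_self hw hcw)
  rw [sub_zero] at h
  refine h.congr' ?_
  filter_upwards [self_mem_nhdsWithin] with ε hε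
  exact (mul_add_log_sub_div_cpow_one_sub hc hε).symm

theorem mul_arg_I_mul_ofReal (θ : ℝ) : θ * arg (I * θ) = |θ| * (π / 2) := by
  rcases lt_trichotomy θ 0 with h | rfl | h
  · rw [arg_eq_neg_pi_div_two_iff.2 ⟨by simp, by simpa⟩, abs_of_neg h]
    ring
  · simp
  · rw [arg_eq_pi_div_two_iff.2 ⟨by simp, by simpa⟩, abs_of_pos h]

theorem I_mul_ofReal_mul_log_I_mul_ofReal (θ : ℝ) :
    I * θ * log (I * θ) = -(↑(π * |θ|) / 2) + I * θ * (Real.log |θ| : ℂ) := by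
  have harg : (θ : ℂ) * arg (I * θ) = |θ| * (π / 2) := by
    exact_mod_cast mul_arg_I_mul_ofReal θ
  rw [log, norm_mul, norm_I, one_mul, norm_real, Real.norm_eq_abs]
  push_cast
  linear_combination (-1 : ℂ) * harg + (θ : ℂ) * (arg (I * θ) : ℂ) * I_mul_I

end Complex

/-- For every fixed real `θ ≠ 0`, the limit as `α → 1⁻` of
`exp(iθ[1/(1-α) + log(1-α)] - (iθ/(1-α))^α)` (principal-branch complex power) equals
`exp(-π|θ|/2 + iθ log|θ|)`. -/
theorem cf_limit (θ : ℝ) (hθ : θ ≠ 0) :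
    Tendsto (fun α : ℝ =>
        Complex.exp (Complex.I * (θ : ℂ) * ((1 / (1 - α) + Real.log (1 - α) : ℝ) : ℂ) -
          (Complex.I * (θ : ℂ) / ((1 - α : ℝ) : ℂ)) ^ ((α : ℝ) : ℂ)))
      (nhdsWithin 1 (Set.Iio 1))
      (nhds (Complex.exp (-(↑(π * |θ|) / 2) + Complex.I * (θ : ℂ) * ((Real.log |θ| : ℝ) : ℂ)))) := by
  have hc : Complex.I * θ ≠ 0 := mul_ne_zero Complex.I_ne_zero (Complex.ofReal_ne_zero.2 hθ)
  have h := ((Complex.tendsto_mul_add_log_sub_div_cpow_one_sub hc).comp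
    (Real.tendsto_const_sub_nhdsLT 1)).cexp
  rw [Complex.I_mul_ofReal_mul_log_I_mul_ofReal] at h
  refine h.congr fun α => ?_
  simp only [Function.comp_apply, sub_sub_cancel]
end

section
/- For every ζ ∈ (0,1], ζ²/(4^ζ - 1) ≤ 1/3, with equality if and only if ζ = 1. (Hence among ζ ≤ 1 the asymptotic relative efficiency ζ²/[0.3445(4^ζ-1)] of the log-mean estimator is maximized at ζ = 1.) -/
/-! With `f ζ = 4 ^ ζ - 1 - 3 ζ²` we have `f 0 = f 1 = 0`, and `f' ζ = log 4 · 4 ^ ζ - 6 ζ` is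
convex with `f' 1 = 4 log 4 - 6 < 0`. If `f ζ ≤ 0` for some `ζ ∈ (0, 1)`, the mean value theorem
on `[0, ζ]` and `[ζ, 1]` gives `c < ζ < d` with `f' c ≤ 0 ≤ f' d`; since `f' 1 < f' d`, convexity
of `f'` on `[c, 1]` forces `f' d < f' c ≤ 0`, a contradiction. -/

open Real Set

theorem lt_of_convexOn_deriv_of_deriv_right_neg {f f' : ℝ → ℝ} {a b x : ℝ}
    (hf : ∀ y ∈ Icc a b, HasDerivAt f (f' y) y) (hf' : ConvexOn ℝ (Icc a b) f')
    (hab : f b ≤ f a) (hb : f' b < 0) (hx : x ∈ Ioo a b) : f b < f x := by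
  by_contra! hfx
  have hcont : ContinuousOn f (Icc a b) := fun y hy => (hf y hy).continuousAt.continuousWithinAt
  obtain ⟨c, hc, hfc⟩ := exists_hasDerivAt_eq_slope f f' hx.1
    (hcont.mono (Icc_subset_Icc_right hx.2.le)) fun y hy => hf y ⟨hy.1.le, hy.2.le.trans hx.2.le⟩
  obtain ⟨d, hd, hfd⟩ := exists_hasDerivAt_eq_slope f f' hx.2
    (hcont.mono (Icc_subset_Icc_left hx.1.le)) fun y hy => hf y ⟨hx.1.le.trans hy.1.le, hy.2.le⟩
  have hc_nonpos : f' c ≤ 0 := by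
    rw [hfc]; exact div_nonpos_of_nonpos_of_nonneg (by linarith) (by linarith [hx.1])
  have hd_nonneg : 0 ≤ f' d := by
    rw [hfd]; exact div_nonneg (by linarith) (by linarith [hx.2])
  have hd_mem : d ∈ openSegment ℝ c b := by
    rw [openSegment_eq_Ioo (hc.2.trans hd.1 |>.trans hd.2)]
    exact ⟨hc.2.trans hd.1, hd.2⟩
  have := hf'.lt_left_of_right_lt ⟨hc.1.le, (hc.2.trans hx.2).le⟩ ⟨hx.1.trans hx.2 |>.le, le_rfl⟩
    hd_mem (by linarith)
  linarith

theorem log_four_lt_three_halves : log 4 < 3 / 2 := by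
  have h : log 4 = 2 * log 2 := by
    rw [show (4 : ℝ) = 2 ^ 2 by norm_num, log_pow, Nat.cast_ofNat]
  linarith [log_two_lt_d9]

theorem three_mul_sq_lt_four_rpow_sub_one {ζ : ℝ} (hζ : ζ ∈ Ioo 0 1) :
    3 * ζ ^ 2 < (4 : ℝ) ^ ζ - 1 := by
  have hderiv : ∀ t, HasDerivAt (fun t : ℝ => (4 : ℝ) ^ t - 1 - 3 * t ^ 2)
      (log 4 * (4 : ℝ) ^ t - 6 * t) t := fun t =>
    (((hasStrictDerivAt_const_rpow (a := 4) (by norm_num) t).hasDerivAt.sub_const 1).sub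
      ((hasDerivAt_pow 2 t).const_mul 3)).congr_deriv (by push_cast; ring)
  have hconv : ConvexOn ℝ (Icc 0 1) fun t : ℝ => log 4 * (4 : ℝ) ^ t - 6 * t :=
    (((convexOn_rpow_left (by norm_num)).subset (subset_univ _) (convex_Icc 0 1)).smul
      (log_nonneg (by norm_num))).sub ((concaveOn_id (convex_Icc 0 1)).smul (by norm_num))
  have := lt_of_convexOn_deriv_of_deriv_right_neg (fun t _ => hderiv t) hconv
    (by norm_num) (by rw [rpow_one]; linarith [log_four_lt_three_halves]) hζ
  norm_num at this
  linarith

/-- For every `ζ ∈ (0,1]`, `ζ²/(4^ζ - 1) ≤ 1/3`, with equality iff `ζ = 1`: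
among `ζ ≤ 1` the asymptotic relative efficiency of the log-mean estimator is maximized
at `ζ = 1`. -/
theorem are_max_at_one (ζ : ℝ) (hζ : ζ ∈ Set.Ioc (0 : ℝ) 1) :
    ζ ^ 2 / ((4 : ℝ) ^ ζ - 1) ≤ 1 / 3 ∧ (ζ ^ 2 / ((4 : ℝ) ^ ζ - 1) = 1 / 3 ↔ ζ = 1) := by
  obtain ⟨h0, h1⟩ := hζ
  rcases h1.eq_or_lt with rfl | hlt
  · norm_num
  have hden : 0 < (4 : ℝ) ^ ζ - 1 := sub_pos.2 (one_lt_rpow (by norm_num) h0)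
  have hstrict : ζ ^ 2 / ((4 : ℝ) ^ ζ - 1) < 1 / 3 := by
    rw [div_lt_div_iff₀ hden (by norm_num)]
    linarith [three_mul_sq_lt_four_rpow_sub_one ⟨h0, hlt⟩]
  exact ⟨hstrict.le, iff_of_false hstrict.ne hlt.ne⟩
end

section
/- Let ζ ∈ (0,1] and let z be a real random variable satisfying E[exp(jζ z)] = (jζ)^{jζ} for every positive integer j. Then for every t in T (where T = (0,∞) if 0 < ζ < 1 and T = (0, e^{-1}) if ζ = 1), E[exp(t ζ^{-ζ} exp(ζ z))] = Σ_{j=0}^∞ t^j j^{ζj}/j! = M_ζ(t) < ∞. -/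
/-!
Expanding `exp (c * exp (ζ z))` as a power series in `exp (ζ z)`, the `j`-th term has expectation
`c ^ j (jζ) ^ (jζ) / j!`, which for `c = t ζ ^ (-ζ)` is `t ^ j j ^ (ζ j) / j!`. Since `j ^ j / j! ≤ e ^ j`,
this term is at most `(t e j ^ (ζ - 1)) ^ j`, so the series is dominated by a geometric one when
`ζ < 1`, or when `ζ = 1` and `t e < 1`; the terms being nonnegative, the series may then be
integrated termwise.
-/

open MeasureTheory Filter Real Nat

theorem integral_exp_mul_eq_tsum_moment {Ω : Type*} [MeasurableSpace Ω] {μ : Measure Ω}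
    {Y : Ω → ℝ} (hY : 0 ≤ Y) {c : ℝ} (hc : 0 ≤ c)
    (hint : ∀ j : ℕ, Integrable (fun ω => Y ω ^ j) μ)
    (hsum : Summable fun j : ℕ => c ^ j * (∫ ω, Y ω ^ j ∂μ) / j !) :
    ∫ ω, exp (c * Y ω) ∂μ = ∑' j : ℕ, c ^ j * (∫ ω, Y ω ^ j ∂μ) / j ! := by
  have hterm : ∀ j : ℕ, ∫ ω, (c * Y ω) ^ j / j ! ∂μ = c ^ j * (∫ ω, Y ω ^ j ∂μ) / j ! := by
    intro j
    simp_rw [mul_pow, integral_div, integral_const_mul]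
  have hnorm : ∀ j : ℕ, ∫ ω, ‖(c * Y ω) ^ j / (j ! : ℝ)‖ ∂μ = c ^ j * (∫ ω, Y ω ^ j ∂μ) / j ! := by
    intro j
    rw [← hterm]
    refine integral_congr_ae (ae_of_all _ fun ω => norm_of_nonneg ?_)
    have : 0 ≤ Y ω := hY ω
    positivity
  simp_rw [exp_eq_exp_ℝ, ← (NormedSpace.expSeries_div_hasSum_exp _).tsum_eq, ← hterm]
  refine (integral_tsum_of_summable_integral_norm (fun j => ?_) ?_).symm
  · simp_rw [mul_pow]
    exact ((hint j).const_mul _).div_const _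
  · simpa only [hnorm] using hsum

theorem norm_pow_mul_rpow_div_factorial_le (t ζ : ℝ) (j : ℕ) :
    ‖t ^ j * (j : ℝ) ^ (ζ * j) / (j ! : ℝ)‖ ≤ (|t| * exp 1 * (j : ℝ) ^ (ζ - 1)) ^ j := by
  rcases j.eq_zero_or_pos with rfl | hj
  · simp
  have hj0 : (0 : ℝ) < j := by exact_mod_cast hj
  have hsplit : (j : ℝ) ^ (ζ * j) = ((j : ℝ) ^ (ζ - 1)) ^ j * (j : ℝ) ^ j := by
    rw [← mul_pow, ← rpow_add_one hj0.ne', sub_add_cancel, ← rpow_mul_natCast hj0.le]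
  have hfac : (j : ℝ) ^ j / j ! ≤ exp 1 ^ j := by
    rw [← exp_nat_mul, mul_one]
    exact pow_div_factorial_le_exp _ hj0.le j
  rw [norm_div, norm_mul, norm_pow, Real.norm_eq_abs, norm_of_nonneg (by positivity),
    Real.norm_natCast, hsplit, mul_pow, mul_pow]
  calc |t| ^ j * (((j : ℝ) ^ (ζ - 1)) ^ j * (j : ℝ) ^ j) / j !
      = |t| ^ j * ((j : ℝ) ^ (ζ - 1)) ^ j * ((j : ℝ) ^ j / j !) := by ring
    _ ≤ |t| ^ j * ((j : ℝ) ^ (ζ - 1)) ^ j * exp 1 ^ j := by gcongr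
    _ = |t| ^ j * exp 1 ^ j * ((j : ℝ) ^ (ζ - 1)) ^ j := by ring

theorem summable_pow_mul_rpow_div_factorial_of_eventually_le {t ζ r : ℝ} (hr : r < 1)
    (h : ∀ᶠ j : ℕ in atTop, |t| * exp 1 * (j : ℝ) ^ (ζ - 1) ≤ r) :
    Summable fun j : ℕ => t ^ j * (j : ℝ) ^ (ζ * j) / j ! := by
  have hr0 : 0 ≤ r := (h.and (eventually_gt_atTop 0)).exists.elim fun j hj =>
    le_trans (by positivity) hj.1
  refine (summable_geometric_of_lt_one hr0 hr).of_norm_bounded_eventually_nat ?_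
  filter_upwards [h] with j hj
  exact (norm_pow_mul_rpow_div_factorial_le t ζ j).trans (pow_le_pow_left₀ (by positivity) hj j)

theorem summable_pow_mul_rpow_div_factorial_of_lt_one {ζ : ℝ} (hζ : ζ < 1) (t : ℝ) :
    Summable fun j : ℕ => t ^ j * (j : ℝ) ^ (ζ * j) / j ! := by
  have hlim : Tendsto (fun j : ℕ => |t| * exp 1 * (j : ℝ) ^ (ζ - 1)) atTop (nhds 0) := by
    have := (tendsto_rpow_neg_atTop (sub_pos.2 hζ)).comp tendsto_natCast_atTop_atTop
    simpa [Function.comp_def] using this.const_mul (|t| * exp 1)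
  exact summable_pow_mul_rpow_div_factorial_of_eventually_le one_half_lt_one
    (hlim.eventually_le_const one_half_pos)

theorem summable_pow_mul_rpow_div_factorial_of_le_one {ζ t : ℝ} (hζ : ζ ≤ 1)
    (ht : |t| < (exp 1)⁻¹) :
    Summable fun j : ℕ => t ^ j * (j : ℝ) ^ (ζ * j) / j ! := by
  refine summable_pow_mul_rpow_div_factorial_of_eventually_le
    (r := |t| * exp 1) ((lt_inv_mul_iff₀' (exp_pos 1)).1 (by rwa [mul_one])) ?_
  filter_upwards [eventually_ge_atTop 1] with j hj
  exact mul_le_of_le_one_right (by positivity)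
    (rpow_le_one_of_one_le_of_nonpos (by exact_mod_cast hj) (by linarith))

theorem mul_rpow_neg_pow_mul_rpow_mul {ζ : ℝ} (hζ : 0 < ζ) (t : ℝ) (j : ℕ) :
    (t * ζ ^ (-ζ)) ^ j * ((j : ℝ) * ζ) ^ ((j : ℝ) * ζ) = t ^ j * (j : ℝ) ^ (ζ * j) := by
  have hcancel : (ζ ^ (-ζ)) ^ j * ζ ^ ((j : ℝ) * ζ) = 1 := by
    rw [← rpow_mul_natCast hζ.le, ← rpow_add hζ, neg_mul, mul_comm, neg_add_cancel, rpow_zero]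
  rw [mul_rpow (Nat.cast_nonneg j) hζ.le, mul_comm ζ (j : ℝ)]
  linear_combination t ^ j * (j : ℝ) ^ ((j : ℝ) * ζ) * hcancel

theorem mgf_of_exp_general {Ω : Type*} [MeasurableSpace Ω] (μ : Measure Ω) [IsProbabilityMeasure μ]
    (ζ : ℝ) (hζ : ζ ∈ Set.Ioc (0 : ℝ) 1) (z : Ω → ℝ)
    (hmom : ∀ j : ℕ, 0 < j → ∫ ω, Real.exp (j * ζ * z ω) ∂μ = ((j : ℝ) * ζ) ^ ((j : ℝ) * ζ))
    (T : Set ℝ) (hT : (ζ < 1 ∧ T = Set.Ioi 0) ∨ (ζ = 1 ∧ T = Set.Ioo 0 (Real.exp 1)⁻¹))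
    (t : ℝ) (htT : t ∈ T) :
    Summable (fun j : ℕ => t ^ j * (j : ℝ) ^ (ζ * j) / (Nat.factorial j : ℝ)) ∧
    ∫ ω, Real.exp (t * ζ ^ (-ζ) * Real.exp (ζ * z ω)) ∂μ =
      ∑' j : ℕ, t ^ j * (j : ℝ) ^ (ζ * j) / (Nat.factorial j : ℝ) := by
  have ht : 0 < t := by rcases hT with ⟨-, rfl⟩ | ⟨-, rfl⟩ <;> [exact htT; exact htT.1]
  have hsum : Summable fun j : ℕ => t ^ j * (j : ℝ) ^ (ζ * j) / j ! := by
    rcases hT with ⟨hζ1, -⟩ | ⟨rfl, rfl⟩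
    · exact summable_pow_mul_rpow_div_factorial_of_lt_one hζ1 t
    · exact summable_pow_mul_rpow_div_factorial_of_le_one le_rfl
        (by rw [abs_of_pos ht]; exact htT.2)
  have hmoment : ∀ j : ℕ, ∫ ω, exp (ζ * z ω) ^ j ∂μ = ((j : ℝ) * ζ) ^ ((j : ℝ) * ζ) := by
    rintro (_ | j)
    · simp -- `(0 * ζ) ^ (0 * ζ) = 1` for `rpow`
    · simp_rw [← exp_nat_mul, ← mul_assoc]
      exact hmom _ j.succ_pos
  have hterm : ∀ j : ℕ, (t * ζ ^ (-ζ)) ^ j * (∫ ω, exp (ζ * z ω) ^ j ∂μ) / j !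
      = t ^ j * (j : ℝ) ^ (ζ * j) / j ! := fun j => by
    rw [hmoment, mul_rpow_neg_pow_mul_rpow_mul hζ.1]
  refine ⟨hsum, ?_⟩
  rw [integral_exp_mul_eq_tsum_moment (fun ω => (exp_pos _).le)
    (mul_pos ht (rpow_pos_of_pos hζ.1 _)).le
    (fun j => .of_integral_ne_zero ?_) (by simpa only [hterm] using hsum)]
  · simp_rw [hterm]
  -- a non-integrable function would have integral `0`
  · rw [hmoment, Ne, rpow_eq_zero_iff_of_nonneg (by have := hζ.1; positivity)]
    exact fun h => h.2 h.1

/-- Let `ζ ∈ (0,1]` and `z` a real random variable with `E[exp(jζz)] = (jζ)^(jζ)` for every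
positive integer `j`.  Then for every `t ∈ T` (`T = (0,∞)` if `ζ < 1`, `T = (0,e⁻¹)` if `ζ = 1`),
`E[exp(t ζ^(-ζ) exp(ζ z))] = ∑_{j≥0} t^j j^(ζj)/j! = M_ζ(t) < ∞`. -/
theorem mgf_of_exp {Ω : Type*} [MeasurableSpace Ω] (μ : Measure Ω) [IsProbabilityMeasure μ]
    (ζ : ℝ) (hζ : ζ ∈ Set.Ioc (0 : ℝ) 1) (z : Ω → ℝ) (hmeas : Measurable z)
    (hmom : ∀ j : ℕ, 0 < j → ∫ ω, Real.exp (j * ζ * z ω) ∂μ = ((j : ℝ) * ζ) ^ ((j : ℝ) * ζ))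
    (T : Set ℝ) (hT : (ζ < 1 ∧ T = Set.Ioi 0) ∨ (ζ = 1 ∧ T = Set.Ioo 0 (Real.exp 1)⁻¹))
    (t : ℝ) (htT : t ∈ T) :
    Summable (fun j : ℕ => t ^ j * (j : ℝ) ^ (ζ * j) / (Nat.factorial j : ℝ)) ∧
    ∫ ω, Real.exp (t * ζ ^ (-ζ) * Real.exp (ζ * z ω)) ∂μ =
      ∑' j : ℕ, t ^ j * (j : ℝ) ^ (ζ * j) / (Nat.factorial j : ℝ) :=
  mgf_of_exp_general μ ζ hζ z hmom T hT t htT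
end

section
/- Let ζ ∈ (0,1], δ ∈ ℝ, ε > 0, and let z_1,...,z_k be i.i.d. real random variables satisfying E[exp(jζ z_1)] = (jζ)^{jζ} for every positive integer j. Define the log-mean estimator δ̂ = ζ^{-1} log(ζ^{-ζ} k^{-1} Σ_{j=1}^k exp(ζ(δ + z_j))). Then for every t in T (where T = (0,∞) if 0 < ζ < 1 and T = (0, e^{-1}) if ζ = 1), P(δ̂ - δ ≥ ε) ≤ exp(-t k e^{ζε}) · (M_ζ(t))^k, where M_ζ(t) = Σ_{j=0}^∞ t^j j^{ζj}/j!. -/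
/-!
Put `Y_j = ζ^(-ζ) e^(ζ z_j)`. The event `δ̂ - δ ≥ ε` is `∑ Y_j ≥ k e^(ζε)`. Expanding
`exp (t Y)` as a power series, the moment hypothesis gives `E[Y^n] = n^(ζn)`, hence
`E[exp (t Y)] = M_ζ(t)`; this series converges on `T` by comparison with a geometric series,
since `n^n / n! ≤ e^n`. Independence turns the mgf of `∑ Y_j` into `M_ζ(t)^k`, and the Chernoff
bound finishes.
-/

open MeasureTheory ProbabilityTheory Real Filter Topology
open scoped Nat

lemma pow_mul_rpow_div_factorial_le {ζ t : ℝ} (ht : 0 ≤ t) {n : ℕ} (hn : 0 < n) :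
    t ^ n * (n : ℝ) ^ (ζ * n) / n ! ≤ (t * exp 1 * (n : ℝ) ^ (ζ - 1)) ^ n := by
  have hn0 : (0 : ℝ) < n := by exact_mod_cast hn
  have hsplit : (n : ℝ) ^ (ζ * n) = ((n : ℝ) ^ (ζ - 1)) ^ n * (n : ℝ) ^ n := by
    rw [← rpow_natCast ((n : ℝ) ^ (ζ - 1)), ← rpow_mul hn0.le, ← rpow_natCast (n : ℝ) n,
      ← rpow_add hn0]
    ring_nf
  calc t ^ n * (n : ℝ) ^ (ζ * n) / n !
      = (t * (n : ℝ) ^ (ζ - 1)) ^ n * ((n : ℝ) ^ n / n !) := by rw [hsplit, mul_pow]; ring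
    _ ≤ (t * (n : ℝ) ^ (ζ - 1)) ^ n * exp 1 ^ n := by
      gcongr
      rw [exp_one_pow]
      exact Real.pow_div_factorial_le_exp _ hn0.le n
    _ = (t * exp 1 * (n : ℝ) ^ (ζ - 1)) ^ n := by ring

lemma exists_lt_one_eventually_mul_rpow_le {ζ t : ℝ} (hζ : ζ ≤ 1) (ht : 0 ≤ t)
    (ht1 : ζ = 1 → t < (exp 1)⁻¹) :
    ∃ r ∈ Set.Ico (0 : ℝ) 1, ∀ᶠ n : ℕ in atTop, t * exp 1 * (n : ℝ) ^ (ζ - 1) ≤ r := by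
  rcases hζ.eq_or_lt with rfl | hζ
  · refine ⟨t * exp 1, ⟨by positivity, ?_⟩, .of_forall fun n => by simp⟩
    exact (lt_div_iff₀ (exp_pos 1)).1 (by simpa using ht1 rfl)
  · have hlim : Tendsto (fun n : ℕ => t * exp 1 * (n : ℝ) ^ (ζ - 1)) atTop (𝓝 0) := by
      simpa using ((tendsto_rpow_neg_atTop (y := 1 - ζ) (by linarith)).comp
        tendsto_natCast_atTop_atTop).const_mul (t * exp 1)
    exact ⟨1 / 2, by norm_num, hlim.eventually_le_const (by norm_num)⟩

theorem summable_pow_mul_rpow_div_factorial {ζ t : ℝ} (hζ : ζ ≤ 1) (ht : 0 ≤ t)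
    (ht1 : ζ = 1 → t < (exp 1)⁻¹) :
    Summable (fun n : ℕ => t ^ n * (n : ℝ) ^ (ζ * n) / n !) := by
  obtain ⟨r, ⟨hr0, hr1⟩, hr⟩ := exists_lt_one_eventually_mul_rpow_le hζ ht ht1
  refine .of_norm_bounded_eventually_nat (summable_geometric_of_lt_one hr0 hr1) ?_
  filter_upwards [hr, eventually_gt_atTop 0] with n hrn hn
  rw [norm_of_nonneg (by positivity)]
  exact (pow_mul_rpow_div_factorial_le ht hn).trans (pow_le_pow_left₀ (by positivity) hrn n)

section Moments

variable {Ω : Type*} [MeasurableSpace Ω] {μ : Measure Ω}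

lemma lintegral_ofReal_exp_mul_eq_tsum {Y : Ω → ℝ} (hY : AEMeasurable Y μ) (hY0 : ∀ ω, 0 ≤ Y ω)
    {t : ℝ} (ht : 0 ≤ t) :
    ∫⁻ ω, ENNReal.ofReal (exp (t * Y ω)) ∂μ =
      ∑' n : ℕ, ENNReal.ofReal (t ^ n / n !) * ∫⁻ ω, ENNReal.ofReal (Y ω ^ n) ∂μ := by
  have hexp : ∀ x, 0 ≤ x → ENNReal.ofReal (exp (t * x)) =
      ∑' n : ℕ, ENNReal.ofReal (t ^ n / n !) * ENNReal.ofReal (x ^ n) := by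
    intro x hx
    rw [exp_eq_exp_ℝ, ← (NormedSpace.expSeries_div_hasSum_exp (t * x)).tsum_eq,
      ENNReal.ofReal_tsum_of_nonneg (fun n => by positivity) (summable_pow_div_factorial _)]
    refine tsum_congr fun n => ?_
    rw [← ENNReal.ofReal_mul (by positivity), mul_pow, mul_div_right_comm]
  simp_rw [hexp _ (hY0 _)]
  rw [lintegral_tsum fun n => ((hY.pow_const n).ennreal_ofReal.const_mul _)]
  exact tsum_congr fun n => lintegral_const_mul'' _ (hY.pow_const n).ennreal_ofReal

lemma lintegral_ofReal_pow_rpow_mul_exp [IsProbabilityMeasure μ] {ζ : ℝ} (hζ : 0 < ζ)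
    {w : Ω → ℝ} (hmom : ∀ j : ℕ, 0 < j →
      ∫ ω, exp (j * ζ * w ω) ∂μ = ((j : ℝ) * ζ) ^ ((j : ℝ) * ζ)) (n : ℕ) :
    ∫⁻ ω, ENNReal.ofReal ((ζ ^ (-ζ) * exp (ζ * w ω)) ^ n) ∂μ =
      ENNReal.ofReal ((n : ℝ) ^ (ζ * n)) := by
  rcases n.eq_zero_or_pos with rfl | hn
  · simp
  have hpow : ∀ x, (ζ ^ (-ζ) * exp (ζ * x)) ^ n = ζ ^ (-(ζ * n)) * exp (n * ζ * x) := by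
    intro x
    rw [mul_pow, ← rpow_natCast, ← rpow_mul hζ.le, ← exp_nat_mul]
    ring_nf
  have hint : Integrable (fun ω => exp (n * ζ * w ω)) μ :=
    .of_integral_ne_zero (by rw [hmom n hn]; positivity)
  simp_rw [hpow]
  rw [← ofReal_integral_eq_lintegral_ofReal (hint.const_mul _) (.of_forall fun _ => by positivity),
    integral_const_mul, hmom n hn, mul_rpow (Nat.cast_nonneg n) hζ.le, mul_left_comm,
    ← rpow_add hζ, mul_comm (n : ℝ) ζ, neg_add_cancel, rpow_zero, mul_one]

lemma mgf_rpow_mul_exp_eq_tsum [IsProbabilityMeasure μ] {ζ t : ℝ} (hζ : 0 < ζ) (ht : 0 ≤ t)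
    {w : Ω → ℝ} (hw : AEMeasurable w μ) (hmom : ∀ j : ℕ, 0 < j →
      ∫ ω, exp (j * ζ * w ω) ∂μ = ((j : ℝ) * ζ) ^ ((j : ℝ) * ζ)) :
    mgf (fun ω => ζ ^ (-ζ) * exp (ζ * w ω)) μ t =
      ∑' n : ℕ, t ^ n * (n : ℝ) ^ (ζ * n) / n ! := by
  have hY : AEMeasurable (fun ω => ζ ^ (-ζ) * exp (ζ * w ω)) μ := by fun_prop
  rw [mgf, integral_eq_lintegral_of_nonneg_ae (.of_forall fun _ => by positivity)
      (hY.const_mul t).exp.aestronglyMeasurable,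
    lintegral_ofReal_exp_mul_eq_tsum hY (fun _ => by positivity) ht,
    ENNReal.tsum_toReal_eq fun _ => ENNReal.mul_ne_top ENNReal.ofReal_ne_top (by
      rw [lintegral_ofReal_pow_rpow_mul_exp hζ hmom]; exact ENNReal.ofReal_ne_top)]
  refine tsum_congr fun n => ?_
  rw [lintegral_ofReal_pow_rpow_mul_exp hζ hmom, ← ENNReal.ofReal_mul (by positivity),
    ENNReal.toReal_ofReal (by positivity), div_mul_eq_mul_div]

lemma mgf_sum_comp_eq_pow_of_identDistrib {ι : Type*} [Fintype ι] {z : ι → Ω → ℝ}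
    (hindep : iIndepFun z μ) {i₀ : ι} (hident : ∀ j, IdentDistrib (z j) (z i₀) μ μ)
    {g : ℝ → ℝ} (hg : Measurable g) (t : ℝ) :
    mgf (∑ j, g ∘ z j) μ t = mgf (g ∘ z i₀) μ t ^ Fintype.card ι :=
  mgf_sum_of_identDistrib₀ (fun j => hg.comp_aemeasurable (hident j).aemeasurable_fst)
    (hindep.comp _ fun _ => hg) (fun i _ j _ => ((hident i).trans (hident j).symm).comp hg)
    (Finset.mem_univ i₀) t

end Moments

lemma card_mul_exp_le_sum_of_log_mean_sub_ge {ι : Type*} [Fintype ι] [Nonempty ι]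
    {ζ δ ε : ℝ} (hζ : 0 < ζ) (x : ι → ℝ)
    (h : ζ⁻¹ * log (ζ ^ (-ζ) * (Fintype.card ι : ℝ)⁻¹ * ∑ j, exp (ζ * (δ + x j))) - δ ≥ ε) :
    Fintype.card ι * exp (ζ * ε) ≤ ∑ j, ζ ^ (-ζ) * exp (ζ * x j) := by
  set S := ∑ j, ζ ^ (-ζ) * exp (ζ * x j)
  have hk : (0 : ℝ) < Fintype.card ι := by exact_mod_cast Fintype.card_pos
  have hS : 0 < S := Finset.sum_pos (fun _ _ => by positivity) Finset.univ_nonempty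
  have hmean : ζ ^ (-ζ) * (Fintype.card ι : ℝ)⁻¹ * ∑ j, exp (ζ * (δ + x j)) =
      exp (ζ * δ) * (S / Fintype.card ι) := by
    simp_rw [S, Finset.mul_sum, mul_add, exp_add]
    rw [Finset.sum_div, Finset.mul_sum]
    refine Finset.sum_congr rfl fun _ _ => by ring
  rw [hmean, log_mul (exp_pos _).ne' (div_pos hS hk).ne', log_exp, ge_iff_le, le_sub_iff_add_le,
    le_inv_mul_iff₀ hζ, mul_add, add_comm, add_le_add_iff_left,
    le_log_iff_exp_le (by positivity), le_div_iff₀ hk] at h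
  linarith

theorem log_mean_tail_bound_general {Ω : Type*} [MeasurableSpace Ω] (μ : Measure Ω)
    [IsProbabilityMeasure μ] (ζ δ ε : ℝ) (hζ : ζ ∈ Set.Ioc (0 : ℝ) 1)
    (k : ℕ) (hk : 0 < k) (z : Fin k → Ω → ℝ)
    (hindep : iIndepFun z μ)
    (hident : ∀ j, IdentDistrib (z j) (z ⟨0, hk⟩) μ μ)
    (hmom : ∀ j : ℕ, 0 < j →
      ∫ ω, Real.exp (j * ζ * z ⟨0, hk⟩ ω) ∂μ = ((j : ℝ) * ζ) ^ ((j : ℝ) * ζ))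
    (T : Set ℝ) (hT : (ζ < 1 ∧ T = Set.Ioi 0) ∨ (ζ = 1 ∧ T = Set.Ioo 0 (Real.exp 1)⁻¹))
    (t : ℝ) (htT : t ∈ T) :
    μ {ω | ζ⁻¹ * Real.log (ζ ^ (-ζ) * (k : ℝ)⁻¹ * ∑ j, Real.exp (ζ * (δ + z j ω))) - δ ≥ ε} ≤
      ENNReal.ofReal (Real.exp (-(t * k * Real.exp (ζ * ε))) *
        (∑' j : ℕ, t ^ j * (j : ℝ) ^ (ζ * j) / (Nat.factorial j : ℝ)) ^ k) := by
  obtain ⟨hζ0, hζ1⟩ := hζ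
  obtain ⟨ht0, ht1⟩ : 0 < t ∧ (ζ = 1 → t < (exp 1)⁻¹) := by
    rcases hT with ⟨hlt, rfl⟩ | ⟨-, rfl⟩
    exacts [⟨htT, fun h => absurd h hlt.ne⟩, ⟨htT.1, fun _ => htT.2⟩]
  set M := ∑' j : ℕ, t ^ j * (j : ℝ) ^ (ζ * j) / (Nat.factorial j : ℝ)
  have hM : 0 < M := (summable_pow_mul_rpow_div_factorial hζ1 ht0.le ht1).tsum_pos
    (fun _ => by positivity) 0 (by simp)
  let g : ℝ → ℝ := fun x => ζ ^ (-ζ) * exp (ζ * x)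
  let Y : Fin k → Ω → ℝ := fun j => g ∘ z j
  have hYmgf : mgf (∑ j, Y j) μ t = M ^ k := by
    rw [mgf_sum_comp_eq_pow_of_identDistrib hindep hident (by fun_prop), Fintype.card_fin]
    exact congrArg (· ^ k)
      (mgf_rpow_mul_exp_eq_tsum hζ0 ht0.le (hident ⟨0, hk⟩).aemeasurable_snd hmom)
  -- Integrable because its integral `M ^ k` is nonzero: this is where `t ∈ T` is needed.
  have hint : Integrable (fun ω => exp (t * (∑ j, Y j) ω)) μ :=
    .of_integral_ne_zero (by rw [← mgf, hYmgf]; positivity)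
  have : Nonempty (Fin k) := ⟨⟨0, hk⟩⟩
  calc _ ≤ μ {ω | k * exp (ζ * ε) ≤ (∑ j, Y j) ω} := measure_mono fun ω hω => by
        simpa [Y, g] using card_mul_exp_le_sum_of_log_mean_sub_ge hζ0 (fun j => z j ω)
          (by simpa using hω)
    _ = ENNReal.ofReal (μ.real {ω | k * exp (ζ * ε) ≤ (∑ j, Y j) ω}) := (ofReal_measureReal).symm
    _ ≤ _ := by
      gcongr
      convert measure_ge_le_exp_mul_mgf _ ht0.le hint using 2
      · ring_nf
      · exact hYmgf.symm

/-- Chernoff-type tail bound for the log-mean estimator.  Let `ζ ∈ (0,1]`, `δ ∈ ℝ`, `ε > 0`,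
and `z₁,…,z_k` i.i.d. real random variables with `E[exp(jζz₁)] = (jζ)^(jζ)` for all positive
integers `j`.  With `δ̂ = ζ⁻¹ log(ζ^(-ζ) k⁻¹ ∑_j exp(ζ(δ + z_j)))`, for every `t ∈ T`
(`T = (0,∞)` if `ζ < 1`, `T = (0,e⁻¹)` if `ζ = 1`),
`P(δ̂ - δ ≥ ε) ≤ exp(-tk e^(ζε)) M_ζ(t)^k`, where `M_ζ(t) = ∑_{j≥0} t^j j^(ζj)/j!`. -/
theorem log_mean_tail_bound {Ω : Type*} [MeasurableSpace Ω] (μ : Measure Ω)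
    [IsProbabilityMeasure μ] (ζ δ ε : ℝ) (hζ : ζ ∈ Set.Ioc (0 : ℝ) 1) (hε : 0 < ε)
    (k : ℕ) (hk : 0 < k) (z : Fin k → Ω → ℝ) (hmeas : ∀ j, Measurable (z j))
    (hindep : iIndepFun z μ)
    (hident : ∀ j, IdentDistrib (z j) (z ⟨0, hk⟩) μ μ)
    (hmom : ∀ j : ℕ, 0 < j →
      ∫ ω, Real.exp (j * ζ * z ⟨0, hk⟩ ω) ∂μ = ((j : ℝ) * ζ) ^ ((j : ℝ) * ζ))
    (T : Set ℝ) (hT : (ζ < 1 ∧ T = Set.Ioi 0) ∨ (ζ = 1 ∧ T = Set.Ioo 0 (Real.exp 1)⁻¹))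
    (t : ℝ) (htT : t ∈ T) :
    μ {ω | ζ⁻¹ * Real.log (ζ ^ (-ζ) * (k : ℝ)⁻¹ * ∑ j, Real.exp (ζ * (δ + z j ω))) - δ ≥ ε} ≤
      ENNReal.ofReal (Real.exp (-(t * k * Real.exp (ζ * ε))) *
        (∑' j : ℕ, t ^ j * (j : ℝ) ^ (ζ * j) / (Nat.factorial j : ℝ)) ^ k) :=
  log_mean_tail_bound_general μ ζ δ ε hζ k hk z hindep hident hmom T hT t htT
end

section
/- Fix ζ ∈ (0,1] and s > 0, and let M_ζ(t) = Σ_{j=0}^∞ t^j j^{ζj}/j!. Then the limit as ε → 0⁺ of ε^{-2}·(log M_ζ(sε) - sε·exp(ζε)) equals s²(4^ζ - 1)/2 - sζ. -/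
/-!
Since `j ^ (ζ j) / j! ≤ e ^ j` for `ζ ≤ 1`, the series `M_ζ` is dominated by a geometric series
near `0`, so `M_ζ(t) = 1 + t + 4^ζ t²/2 + O(t³)`. Expanding `log (1 + u) = u - u²/2 + O(u³)` gives
`log M_ζ(t) = t + (4^ζ - 1) t²/2 + O(t³)`, while `ε exp(ζε) = ε + ζε² + O(ε³)`; substituting
`t = sε`, the difference is `(s²(4^ζ - 1)/2 - sζ) ε² + O(ε³)`.
-/

open Filter Asymptotics Topology Real
open scoped Nat

/-- `M_ζ(t)` in the paper's notation. -/
noncomputable def selfPowSeries (ζ t : ℝ) : ℝ :=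
  ∑' j : ℕ, t ^ j * (j : ℝ) ^ (ζ * j) / (Nat.factorial j : ℝ)

lemma natCast_rpow_mul_self_div_factorial_le {ζ : ℝ} (hζ : ζ ≤ 1) (j : ℕ) :
    (j : ℝ) ^ (ζ * j) / j ! ≤ exp 1 ^ j := by
  rcases j.eq_zero_or_pos with rfl | hj
  · simp
  calc (j : ℝ) ^ (ζ * j) / j ! ≤ (j : ℝ) ^ j / j ! := by
        gcongr
        rw [← rpow_natCast]
        exact rpow_le_rpow_of_exponent_le (by exact_mod_cast hj)
          (mul_le_of_le_one_left j.cast_nonneg hζ)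
    _ ≤ exp j := pow_div_factorial_le_exp _ j.cast_nonneg j
    _ = exp 1 ^ j := by rw [← exp_nat_mul, mul_one]

lemma norm_selfPowSeries_term_le {ζ : ℝ} (hζ : ζ ≤ 1) (t : ℝ) (j : ℕ) :
    ‖t ^ j * (j : ℝ) ^ (ζ * j) / (j ! : ℝ)‖ ≤ (|t| * exp 1) ^ j := by
  rw [mul_div_assoc, norm_mul, norm_pow, Real.norm_eq_abs, Real.norm_of_nonneg (by positivity),
    mul_pow]
  gcongr
  exact natCast_rpow_mul_self_div_factorial_le hζ j

lemma norm_tsum_nat_add_le_of_norm_le_geometric {E : Type*} [NormedAddCommGroup E] {a : ℕ → E}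
    {r : ℝ} (hr₀ : 0 ≤ r) (hr : r ≤ 1 / 2) (ha : ∀ j, ‖a j‖ ≤ r ^ j) (n : ℕ) :
    ‖∑' i, a (i + n)‖ ≤ 2 * r ^ n := by
  have hsum : HasSum (fun i => r ^ (i + n)) (r ^ n * (1 - r)⁻¹) := by
    simpa only [pow_add, mul_comm] using
      (hasSum_geometric_of_lt_one hr₀ (by linarith)).mul_left (r ^ n)
  have hinv : (1 - r)⁻¹ ≤ 2 := by rw [inv_le_comm₀ (by linarith) two_pos]; linarith
  calc ‖∑' i, a (i + n)‖ ≤ r ^ n * (1 - r)⁻¹ := tsum_of_norm_bounded hsum fun i => ha (i + n)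
    _ ≤ 2 * r ^ n := by rw [mul_comm]; gcongr

lemma selfPowSeries_eq_add_tsum {ζ t : ℝ} (hζ : ζ ≤ 1) (ht : |t| * exp 1 < 1) :
    selfPowSeries ζ t = 1 + t + 4 ^ ζ / 2 * t ^ 2 +
      ∑' i : ℕ, t ^ (i + 3) * ((i + 3 : ℕ) : ℝ) ^ (ζ * (i + 3 : ℕ)) / (i + 3)! := by
  have hsum : Summable fun j : ℕ => t ^ j * (j : ℝ) ^ (ζ * j) / j ! :=
    .of_norm_bounded (summable_geometric_of_lt_one (by positivity) ht)
      (norm_selfPowSeries_term_le hζ t)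
  have h4 : (2 : ℝ) ^ (ζ * 2) = 4 ^ ζ := by
    rw [mul_comm, rpow_mul zero_le_two]; norm_num
  rw [selfPowSeries, ← hsum.sum_add_tsum_nat_add 3]
  norm_num [Finset.sum_range_succ, h4, Nat.factorial]
  ring

lemma selfPowSeries_sub_quadratic_isBigO {ζ : ℝ} (hζ : ζ ≤ 1) :
    (fun t => selfPowSeries ζ t - (1 + t + 4 ^ ζ / 2 * t ^ 2)) =O[𝓝 0] (· ^ 3) := by
  have hsmall : ∀ᶠ t : ℝ in 𝓝 0, |t| * exp 1 ≤ 1 / 2 :=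
    ((continuous_abs.mul continuous_const).tendsto' 0 0 (by simp)).eventually
      (Iic_mem_nhds (by norm_num))
  refine .of_bound (2 * exp 1 ^ 3) ?_
  filter_upwards [hsmall] with t ht
  rw [selfPowSeries_eq_add_tsum hζ (by linarith), add_sub_cancel_left, norm_pow]
  calc _ ≤ 2 * (|t| * exp 1) ^ 3 :=
        norm_tsum_nat_add_le_of_norm_le_geometric (by positivity) ht
          (norm_selfPowSeries_term_le hζ t) 3
    _ = 2 * exp 1 ^ 3 * ‖t‖ ^ 3 := by rw [Real.norm_eq_abs]; ring

lemma log_one_add_sub_isBigO :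
    (fun u : ℝ => log (1 + u) - (u - u ^ 2 / 2)) =O[𝓝 0] (· ^ 3) := by
  refine .of_bound 2 ?_
  filter_upwards [Metric.ball_mem_nhds (0 : ℝ) (show (0 : ℝ) < 1 / 2 by norm_num)] with u hu
  rw [Metric.mem_ball, dist_zero_right, Real.norm_eq_abs] at hu
  have h := abs_log_sub_add_sum_range_le (x := -u) (by rw [abs_neg]; linarith) 2
  have htaylor : (∑ i ∈ Finset.range 2, (-u) ^ (i + 1) / (i + 1)) + log (1 - -u) =
      log (1 + u) - (u - u ^ 2 / 2) := by
    simp only [Finset.sum_range_succ, Finset.sum_range_zero]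
    ring_nf
  rw [htaylor, abs_neg] at h
  rw [Real.norm_eq_abs, norm_pow, Real.norm_eq_abs]
  calc _ ≤ |u| ^ 3 / (1 - |u|) := h
    _ ≤ 2 * |u| ^ 3 := by
      rw [div_le_iff₀ (by linarith)]
      nlinarith [pow_nonneg (abs_nonneg u) 3]

lemma log_sub_isBigO_of_sub_isBigO {M : ℝ → ℝ} {a : ℝ}
    (hM : (fun t => M t - (1 + t + a * t ^ 2)) =O[𝓝 0] (· ^ 3)) :
    (fun t => log (M t) - (t + (a - 1 / 2) * t ^ 2)) =O[𝓝 0] (· ^ 3) := by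
  have hsq : (fun t : ℝ => t ^ 2) =O[𝓝 0] id := (isLittleO_pow_id one_lt_two).isBigO
  have hcube : (fun t : ℝ => t ^ 3) =O[𝓝 0] (· ^ 2) := (isLittleO_pow_pow (by norm_num)).isBigO
  have hu_sub : (fun t => (M t - 1) - t) =O[𝓝 0] (· ^ 2) :=
    ((hM.trans hcube).add ((isBigO_refl _ _).const_mul_left a)).congr_left fun t => by ring
  have hu : (fun t => M t - 1) =O[𝓝 0] id :=
    ((hu_sub.trans hsq).add (isBigO_refl _ _)).congr_left fun t => by simp
  have hu₀ : Tendsto (fun t => M t - 1) (𝓝 0) (𝓝 0) := hu.trans_tendsto tendsto_id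
  have hlog : (fun t => log (1 + (M t - 1)) - ((M t - 1) - (M t - 1) ^ 2 / 2)) =O[𝓝 0] (· ^ 3) :=
    (log_one_add_sub_isBigO.comp_tendsto hu₀).trans (hu.pow 3)
  have hprod : (fun t => ((M t - 1) - t) * ((M t - 1) + t)) =O[𝓝 0] (· ^ 3) :=
    (hu_sub.mul (hu.add (isBigO_refl _ _))).congr_right fun t => by rw [id]; ring
  refine ((hlog.add hM).sub (hprod.const_mul_left (1 / 2))).congr_left fun t => ?_
  rw [add_sub_cancel]
  ring

lemma mul_exp_mul_sub_isBigO (ζ : ℝ) :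
    (fun ε => ε * exp (ζ * ε) - (ε + ζ * ε ^ 2)) =O[𝓝 0] (· ^ 3) := by
  have hexp : (fun ε => exp (ζ * ε) - (1 + ζ * ε)) =O[𝓝 0] (· ^ 2) := by
    have := (exp_sub_sum_range_isBigO_pow 2).comp_tendsto
      ((continuous_const_mul ζ).tendsto' 0 0 (mul_zero ζ))
    refine (this.trans ?_).congr_left fun ε => ?_
    · exact ((isBigO_refl _ _).const_mul_left (ζ ^ 2)).congr_left fun ε => by simp [mul_pow]
    · simp [Finset.sum_range_succ]
  exact ((isBigO_refl (fun ε : ℝ => ε) _).mul hexp).congr (fun ε => by ring) fun ε => by ring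

lemma tendsto_inv_sq_mul_of_sub_isBigO {f : ℝ → ℝ} {c : ℝ}
    (h : (fun ε => f ε - c * ε ^ 2) =O[𝓝 0] (· ^ 3)) :
    Tendsto (fun ε => (ε ^ 2)⁻¹ * f ε) (𝓝[≠] 0) (𝓝 c) := by
  have hsmall : Tendsto (fun ε => (ε ^ 2)⁻¹ * (f ε - c * ε ^ 2)) (𝓝[≠] 0) (𝓝 0) := by
    refine IsBigO.trans_tendsto ?_ (tendsto_id.mono_left nhdsWithin_le_nhds)
    refine ((isBigO_refl (fun ε : ℝ => (ε ^ 2)⁻¹) _).mul (h.mono nhdsWithin_le_nhds)).congr'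
      .rfl ?_
    filter_upwards [self_mem_nhdsWithin] with ε (hε : ε ≠ 0)
    field_simp
    rfl
  have hlim := hsmall.const_add c
  rw [add_zero] at hlim
  refine hlim.congr' ?_
  filter_upwards [self_mem_nhdsWithin] with ε (hε : ε ≠ 0)
  field_simp
  ring

theorem tail_constant_limit_general (ζ : ℝ) (hζ : ζ ∈ Set.Ioc (0 : ℝ) 1) (s : ℝ) :
    Tendsto (fun ε : ℝ => (ε ^ 2)⁻¹ *
        (Real.log (∑' j : ℕ, (s * ε) ^ j * (j : ℝ) ^ (ζ * j) / (Nat.factorial j : ℝ)) -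
          s * ε * Real.exp (ζ * ε)))
      (nhdsWithin 0 (Set.Ioi 0))
      (nhds (s ^ 2 * ((4 : ℝ) ^ ζ - 1) / 2 - s * ζ)) := by
  have hscale : (fun ε : ℝ => (s * ε) ^ 3) =O[𝓝 0] (· ^ 3) :=
    ((isBigO_refl _ _).const_mul_left (s ^ 3)).congr_left fun ε => by ring
  have hlog : (fun ε => log (selfPowSeries ζ (s * ε)) -
      (s * ε + ((4 : ℝ) ^ ζ / 2 - 1 / 2) * (s * ε) ^ 2)) =O[𝓝 0] (· ^ 3) :=
    ((log_sub_isBigO_of_sub_isBigO (selfPowSeries_sub_quadratic_isBigO hζ.2)).comp_tendsto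
      ((continuous_const_mul s).tendsto' 0 0 (mul_zero s))).trans hscale
  have h : (fun ε => (log (selfPowSeries ζ (s * ε)) - s * ε * exp (ζ * ε)) -
      (s ^ 2 * ((4 : ℝ) ^ ζ - 1) / 2 - s * ζ) * ε ^ 2) =O[𝓝 0] (· ^ 3) :=
    (hlog.sub ((mul_exp_mul_sub_isBigO ζ).const_mul_left s)).congr_left fun ε => by ring
  exact (tendsto_inv_sq_mul_of_sub_isBigO h).mono_left (nhdsWithin_mono _ fun _ hx => hx.ne')

/-- Fix `ζ ∈ (0,1]` and `s > 0`, and let `M_ζ(t) = ∑_{j≥0} t^j j^(ζj)/j!`.  Then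
`ε⁻² (log M_ζ(sε) - sε exp(ζε)) → s²(4^ζ - 1)/2 - sζ` as `ε → 0⁺`. -/
theorem tail_constant_limit (ζ : ℝ) (hζ : ζ ∈ Set.Ioc (0 : ℝ) 1) (s : ℝ) (hs : 0 < s) :
    Tendsto (fun ε : ℝ => (ε ^ 2)⁻¹ *
        (Real.log (∑' j : ℕ, (s * ε) ^ j * (j : ℝ) ^ (ζ * j) / (Nat.factorial j : ℝ)) -
          s * ε * Real.exp (ζ * ε)))
      (nhdsWithin 0 (Set.Ioi 0))
      (nhds (s ^ 2 * ((4 : ℝ) ^ ζ - 1) / 2 - s * ζ)) :=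
  tail_constant_limit_general ζ hζ s
end
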